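/- arXiv:1503.08375 — 6 statements merged into one kernel-verified Lean document; each statement's English description precedes it below -/
import Mathlib

section
/- Let U be a 6-dimensional F_p-vector space with basis u₁,...,u₆, and let S² ⊆ Λ²U be the annihilator of the span of f₁ = u₁*∧u₂* + u₃*∧u₄*, f₂ = u₁*∧u₄* + u₂*∧u₅* + u₃*∧u₆*, f₃ = u₃*∧u₅* + u₄*∧u₆* under the non-degenerate pairing Λ²U × Λ²U* → F_p. Then S² is spanned by its decomposable elements, i.e. S² = span{ u∧u' ∈ S² : u, u' ∈ U }. -/
/-!
Indices start at `0`, as in `u : Basis (Fin 6) _ _`; write `eᵢⱼ = uᵢ ∧ uⱼ`. The map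
`x ↦ x - φ₁(x) e₀₁ - φ₂(x) e₀₃ - φ₃(x) e₂₄` is the identity on `S₂`, so it suffices that it
sends every `eᵢⱼ` into the span of the decomposable elements of `S₂`. Of the fifteen `eᵢⱼ` with
`i < j`, eight lie in `S₂` and `e₀₁`, `e₀₃`, `e₂₄` are sent to `0`; the other four are sent to
`e₂₃ - e₀₁`, `e₁₄ - e₀₃`, `e₂₅ - e₀₃`, `e₃₅ - e₂₄`, which are
combinations of those eight and of the decomposable elements `(u₀ + u₃) ∧ (u₁ + u₂)`,
`(u₀ - u₁) ∧ (u₃ + u₄)`, `(u₀ + u₂) ∧ (u₁ - u₃ + u₅)`, `(u₂ + u₃) ∧ (u₀ - u₄ + u₅)` of `S₂`.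
-/

open ExteriorAlgebra

/-- The standard pairing of a `d`-tuple of dual vectors against the exterior algebra:
on the degree-`d` component it is `w ↦ ⟨⟨w, f₁ ∧ ⋯ ∧ f_d⟩⟩ = det (fᵢ(uⱼ))`, and it
vanishes on the other graded components. -/
noncomputable def pairDual (F U : Type*) [Field F] [AddCommGroup U] [Module F U]
    (d : ℕ) (f : Fin d → Module.Dual F U) : ExteriorAlgebra F U →ₗ[F] F :=
  ExteriorAlgebra.liftAlternating
    (Pi.single d (Matrix.detRowAlternating.compLinearMap (LinearMap.pi f)))

open Submodule Set

namespace ExteriorAlgebra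

variable {R M : Type*} [CommRing R] [AddCommGroup M] [Module R M]

lemma ι_mul_ι_mem_exteriorPower_two (a b : M) : ι R a * ι R b ∈ ⋀[R]^2 M := by
  simpa [ιMulti_apply] using ιMulti_range R 2 (mem_range_self ![a, b])

lemma ι_mul_ι_eq_neg (a b : M) : ι R a * ι R b = -(ι R b * ι R a) :=
  eq_neg_of_add_eq_zero_left (ι_add_mul_swap a b)

lemma exteriorPower_two_le_span_ι_mul_ι {I : Type*} (b : Module.Basis I R M) :
    ⋀[R]^2 M ≤ span R (range fun ij : I × I => ι R (b ij.1) * ι R (b ij.2)) := by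
  rw [← exteriorPower.ιMulti_span_fixedDegree_of_span_eq_top R 2 M b.span_eq]
  refine span_mono ?_
  rintro - ⟨a, ha, rfl⟩
  obtain ⟨i, hi⟩ := ha (mem_range_self 0)
  obtain ⟨j, hj⟩ := ha (mem_range_self 1)
  exact ⟨(i, j), by simp [ιMulti_apply, hi, hj, Matrix.vecTail]⟩

end ExteriorAlgebra

lemma pairDual_two_ι_mul_ι {F U : Type*} [Field F] [AddCommGroup U] [Module F U]
    (c d : Module.Dual F U) (a b : U) :
    pairDual F U 2 ![c, d] (ι F a * ι F b) = c a * d b - c b * d a := by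
  rw [pairDual, liftAlternating_ι_mul, liftAlternating_ι]
  simp only [AlternatingMap.curryLeft_apply_apply, AlternatingMap.compLinearMap_apply,
    Pi.single_eq_same]
  show Matrix.det (Matrix.of _) = _
  simp [Matrix.det_fin_two, mul_comm]

namespace SixDimensional

variable {F U : Type*} [Field F] [AddCommGroup U] [Module F U] (u : Module.Basis (Fin 6) F U)

noncomputable def φ₁ : ExteriorAlgebra F U →ₗ[F] F :=
  pairDual F U 2 ![u.coord 0, u.coord 1] + pairDual F U 2 ![u.coord 2, u.coord 3]

noncomputable def φ₂ : ExteriorAlgebra F U →ₗ[F] F :=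
  pairDual F U 2 ![u.coord 0, u.coord 3] + pairDual F U 2 ![u.coord 1, u.coord 4]
    + pairDual F U 2 ![u.coord 2, u.coord 5]

noncomputable def φ₃ : ExteriorAlgebra F U →ₗ[F] F :=
  pairDual F U 2 ![u.coord 2, u.coord 4] + pairDual F U 2 ![u.coord 3, u.coord 5]

noncomputable def S₂ : Submodule F (ExteriorAlgebra F U) :=
  ⋀[F]^2 U ⊓ LinearMap.ker (φ₁ u) ⊓ LinearMap.ker (φ₂ u) ⊓ LinearMap.ker (φ₃ u)

noncomputable def decomposables : Set (ExteriorAlgebra F U) :=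
  {x | x ∈ S₂ u ∧ ∃ a b : U, x = ι F a * ι F b}

lemma φ₁_ι_mul_ι (a b : U) :
    φ₁ u (ι F a * ι F b) = (u.repr a 0 * u.repr b 1 - u.repr b 0 * u.repr a 1)
      + (u.repr a 2 * u.repr b 3 - u.repr b 2 * u.repr a 3) := by
  simp [φ₁, pairDual_two_ι_mul_ι]

lemma φ₂_ι_mul_ι (a b : U) :
    φ₂ u (ι F a * ι F b) = (u.repr a 0 * u.repr b 3 - u.repr b 0 * u.repr a 3)
      + (u.repr a 1 * u.repr b 4 - u.repr b 1 * u.repr a 4)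
      + (u.repr a 2 * u.repr b 5 - u.repr b 2 * u.repr a 5) := by
  simp [φ₂, pairDual_two_ι_mul_ι]

lemma φ₃_ι_mul_ι (a b : U) :
    φ₃ u (ι F a * ι F b) = (u.repr a 2 * u.repr b 4 - u.repr b 2 * u.repr a 4)
      + (u.repr a 3 * u.repr b 5 - u.repr b 3 * u.repr a 5) := by
  simp [φ₃, pairDual_two_ι_mul_ι]

lemma ι_mul_ι_mem_span_decomposables {a b : U} (h₁ : φ₁ u (ι F a * ι F b) = 0)
    (h₂ : φ₂ u (ι F a * ι F b) = 0) (h₃ : φ₃ u (ι F a * ι F b) = 0) :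
    ι F a * ι F b ∈ span F (decomposables u) :=
  subset_span ⟨⟨⟨⟨ι_mul_ι_mem_exteriorPower_two a b, h₁⟩, h₂⟩, h₃⟩, a, b, rfl⟩

noncomputable def projection : ExteriorAlgebra F U →ₗ[F] ExteriorAlgebra F U :=
  LinearMap.id - (φ₁ u).smulRight (ι F (u 0) * ι F (u 1))
    - (φ₂ u).smulRight (ι F (u 0) * ι F (u 3)) - (φ₃ u).smulRight (ι F (u 2) * ι F (u 4))

lemma projection_apply (x : ExteriorAlgebra F U) :
    projection u x = x - φ₁ u x • (ι F (u 0) * ι F (u 1)) - φ₂ u x • (ι F (u 0) * ι F (u 3))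
      - φ₃ u x • (ι F (u 2) * ι F (u 4)) := rfl

lemma projection_apply_of_mem {x : ExteriorAlgebra F U} (hx : x ∈ S₂ u) :
    projection u x = x := by
  obtain ⟨⟨⟨-, h₁⟩, h₂⟩, h₃⟩ := hx
  simp [projection_apply, LinearMap.mem_ker.mp h₁, LinearMap.mem_ker.mp h₂, LinearMap.mem_ker.mp h₃]

lemma relations_mem_span_decomposables :
    ι F (u 2) * ι F (u 3) - ι F (u 0) * ι F (u 1) ∈ span F (decomposables u) ∧
    ι F (u 1) * ι F (u 4) - ι F (u 0) * ι F (u 3) ∈ span F (decomposables u) ∧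
    ι F (u 2) * ι F (u 5) - ι F (u 0) * ι F (u 3) ∈ span F (decomposables u) ∧
    ι F (u 3) * ι F (u 5) - ι F (u 2) * ι F (u 4) ∈ span F (decomposables u) := by
  have r₂₃ : ι F (u 2) * ι F (u 3) - ι F (u 0) * ι F (u 1) ∈ span F (decomposables u) := by
    have : ι F (u 2) * ι F (u 3) - ι F (u 0) * ι F (u 1) = ι F (u 0) * ι F (u 2)
        - ι F (u 1) * ι F (u 3) - ι F (u 0 + u 3) * ι F (u 1 + u 2) := by
      simp only [map_add, add_mul, mul_add]
      rw [ι_mul_ι_eq_neg (u 3) (u 1), ι_mul_ι_eq_neg (u 3) (u 2)]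
      abel
    rw [this]
    refine sub_mem (sub_mem ?_ ?_) ?_ <;> apply ι_mul_ι_mem_span_decomposables <;>
      simp only [φ₁_ι_mul_ι, φ₂_ι_mul_ι, φ₃_ι_mul_ι] <;> simp
  have r₁₄ : ι F (u 1) * ι F (u 4) - ι F (u 0) * ι F (u 3) ∈ span F (decomposables u) := by
    have : ι F (u 1) * ι F (u 4) - ι F (u 0) * ι F (u 3) = ι F (u 0) * ι F (u 4)
        - ι F (u 1) * ι F (u 3) - ι F (u 0 - u 1) * ι F (u 3 + u 4) := by
      simp only [map_add, map_sub, sub_mul, mul_add]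
      abel
    rw [this]
    refine sub_mem (sub_mem ?_ ?_) ?_ <;> apply ι_mul_ι_mem_span_decomposables <;>
      simp only [φ₁_ι_mul_ι, φ₂_ι_mul_ι, φ₃_ι_mul_ι] <;> simp
  have r₂₅ : ι F (u 2) * ι F (u 5) - ι F (u 0) * ι F (u 3) ∈ span F (decomposables u) := by
    have : ι F (u 2) * ι F (u 5) - ι F (u 0) * ι F (u 3) = ι F (u 0 + u 2) * ι F (u 1 - u 3 + u 5)
        - ι F (u 0) * ι F (u 5) + ι F (u 1) * ι F (u 2)
        + (ι F (u 2) * ι F (u 3) - ι F (u 0) * ι F (u 1)) := by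
      simp only [map_add, map_sub, add_mul, mul_add, mul_sub]
      rw [ι_mul_ι_eq_neg (u 2) (u 1)]
      abel
    rw [this]
    refine add_mem (add_mem (sub_mem ?_ ?_) ?_) r₂₃ <;> apply ι_mul_ι_mem_span_decomposables <;>
      simp only [φ₁_ι_mul_ι, φ₂_ι_mul_ι, φ₃_ι_mul_ι] <;> simp
  have r₃₅ : ι F (u 3) * ι F (u 5) - ι F (u 2) * ι F (u 4) ∈ span F (decomposables u) := by
    have : ι F (u 3) * ι F (u 5) - ι F (u 2) * ι F (u 4) = ι F (u 2 + u 3) * ι F (u 0 - u 4 + u 5)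
        + ι F (u 0) * ι F (u 2) + ι F (u 3) * ι F (u 4)
        - (ι F (u 2) * ι F (u 5) - ι F (u 0) * ι F (u 3)) := by
      simp only [map_add, map_sub, add_mul, mul_add, mul_sub]
      rw [ι_mul_ι_eq_neg (u 2) (u 0), ι_mul_ι_eq_neg (u 3) (u 0)]
      abel
    rw [this]
    refine sub_mem (add_mem (add_mem ?_ ?_) ?_) r₂₅ <;> apply ι_mul_ι_mem_span_decomposables <;>
      simp only [φ₁_ι_mul_ι, φ₂_ι_mul_ι, φ₃_ι_mul_ι] <;> simp
  exact ⟨r₂₃, r₁₄, r₂₅, r₃₅⟩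

lemma projection_ι_mul_ι_mem_span_of_lt {i j : Fin 6} (hij : i < j) :
    projection u (ι F (u i) * ι F (u j)) ∈ span F (decomposables u) := by
  obtain ⟨r₂₃, r₁₄, r₂₅, r₃₅⟩ := relations_mem_span_decomposables u
  fin_cases i <;> fin_cases j <;> simp at hij <;>
    simp only [projection_apply, φ₁_ι_mul_ι, φ₂_ι_mul_ι, φ₃_ι_mul_ι] <;> simp <;>
    first
    | assumption
    | (apply ι_mul_ι_mem_span_decomposables <;>
        simp only [φ₁_ι_mul_ι, φ₂_ι_mul_ι, φ₃_ι_mul_ι] <;> simp)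

lemma projection_ι_mul_ι_mem_span (i j : Fin 6) :
    projection u (ι F (u i) * ι F (u j)) ∈ span F (decomposables u) := by
  rcases lt_trichotomy i j with hij | rfl | hji
  · exact projection_ι_mul_ι_mem_span_of_lt u hij
  · simp
  · rw [ι_mul_ι_eq_neg, map_neg]
    exact neg_mem (projection_ι_mul_ι_mem_span_of_lt u hji)

lemma projection_mem_span_of_mem_exteriorPower_two {x : ExteriorAlgebra F U}
    (hx : x ∈ ⋀[F]^2 U) : projection u x ∈ span F (decomposables u) := by
  suffices ⋀[F]^2 U ≤ (span F (decomposables u)).comap (projection u) from this hx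
  refine (exteriorPower_two_le_span_ι_mul_ι u).trans (span_le.mpr ?_)
  rintro - ⟨⟨i, j⟩, rfl⟩
  exact projection_ι_mul_ι_mem_span u i j

theorem span_decomposables_eq : span F (decomposables u) = S₂ u := by
  refine le_antisymm (span_le.mpr fun x hx => hx.1) fun x hx => ?_
  rw [← projection_apply_of_mem u hx]
  exact projection_mem_span_of_mem_exteriorPower_two u hx.1.1.1

end SixDimensional

theorem stmt_2_general (p : ℕ) [Fact p.Prime] (U : Type*) [AddCommGroup U]
    [Module (ZMod p) U] (u : Module.Basis (Fin 6) (ZMod p) U) :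
    let F := ZMod p
    let φ₁ := pairDual F U 2 ![u.coord 0, u.coord 1] + pairDual F U 2 ![u.coord 2, u.coord 3]
    let φ₂ := pairDual F U 2 ![u.coord 0, u.coord 3] + pairDual F U 2 ![u.coord 1, u.coord 4]
      + pairDual F U 2 ![u.coord 2, u.coord 5]
    let φ₃ := pairDual F U 2 ![u.coord 2, u.coord 4] + pairDual F U 2 ![u.coord 3, u.coord 5]
    let S₂ : Submodule F (ExteriorAlgebra F U) :=
      ⋀[F]^2 U ⊓ LinearMap.ker φ₁ ⊓ LinearMap.ker φ₂ ⊓ LinearMap.ker φ₃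
    Submodule.span F {x | x ∈ S₂ ∧ ∃ a b : U, x = ι F a * ι F b} = S₂ :=
  SixDimensional.span_decomposables_eq u

/-- Let `U` be a 6-dimensional `F_p`-vector space with basis `u₁,…,u₆`, and let
`S² ⊆ Λ²U` be the annihilator of `span{f₁, f₂, f₃}` where `f₁ = u₁*∧u₂* + u₃*∧u₄*`,
`f₂ = u₁*∧u₄* + u₂*∧u₅* + u₃*∧u₆*`, `f₃ = u₃*∧u₅* + u₄*∧u₆*`.  Then `S²` is spanned by
its decomposable elements: `S² = span{ u∧u' ∈ S² : u, u' ∈ U }`. -/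
theorem stmt_2 (p : ℕ) [Fact p.Prime] (hp2 : p ≠ 2) (U : Type*) [AddCommGroup U]
    [Module (ZMod p) U] (u : Module.Basis (Fin 6) (ZMod p) U) :
    let F := ZMod p
    let φ₁ := pairDual F U 2 ![u.coord 0, u.coord 1] + pairDual F U 2 ![u.coord 2, u.coord 3]
    let φ₂ := pairDual F U 2 ![u.coord 0, u.coord 3] + pairDual F U 2 ![u.coord 1, u.coord 4]
      + pairDual F U 2 ![u.coord 2, u.coord 5]
    let φ₃ := pairDual F U 2 ![u.coord 2, u.coord 4] + pairDual F U 2 ![u.coord 3, u.coord 5]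
    let S₂ : Submodule F (ExteriorAlgebra F U) :=
      ⋀[F]^2 U ⊓ LinearMap.ker φ₁ ⊓ LinearMap.ker φ₂ ⊓ LinearMap.ker φ₃
    Submodule.span F {x | x ∈ S₂ ∧ ∃ a b : U, x = ι F a * ι F b} = S₂ :=
  stmt_2_general p U u
end

section
/- Let U be a 6-dimensional F_p-vector space with basis u₁,...,u₆, set f₁ = u₁*∧u₂* + u₃*∧u₄*, f₂ = u₁*∧u₄* + u₂*∧u₅* + u₃*∧u₆*, f₃ = u₃*∧u₅* + u₄*∧u₆* in Λ²U*, and let K³ = span{ fᵢ ∧ uⱼ* : 1 ≤ i ≤ 3, 1 ≤ j ≤ 6 } ⊆ Λ³U*. Then dim K³ = 18. -/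
/-!
A linear relation `∑ c (i, j) • fᵢ ∧ uⱼ* = 0` can be tested against the functionals
`x ↦ x(u_k, u_l, u_m)` on three-forms, i.e. the pairing `a ∧ b ∧ c ↦ det [a, b, c](u_k, u_l, u_m)`
extended linearly to the exterior algebra. Their values on the products `fᵢ ∧ uⱼ*` are integers,
and each coefficient `c (i, j)` is a signed sum of at most three of these coordinates.
So the eighteen products are linearly independent over every commutative ring, and `K³` is
spanned by an independent family of eighteen vectors.
-/

open ExteriorAlgebra

theorem linearIndependent_of_int_leftInverse {κ τ R M : Type*} [CommRing R] [AddCommGroup M]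
    [Module R M] [Fintype κ] [DecidableEq κ] {v : κ → M} (φ : τ → M →ₗ[R] R) (A : κ → τ → ℤ)
    (hA : ∀ q t, φ t (v q) = A q t) (L : κ → List (ℤ × τ))
    (hL : ∀ q q', ((L q).map fun x => x.1 * A q' x.2).sum = if q = q' then 1 else 0) :
    LinearIndependent R v := by
  rw [Fintype.linearIndependent_iff]
  intro c hc q
  have hφ : ∀ t, ∑ q', c q' * A q' t = 0 := fun t => by
    simpa [hA, mul_comm] using congrArg (φ t) hc
  calc c q = ∑ q', c q' * ((if q = q' then 1 else 0 : ℤ) : R) := by simp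
    _ = ∑ q', c q' * ((L q).map fun x => (x.1 : R) * A q' x.2).sum := by
      simp [← hL, Int.cast_list_sum, List.map_map, Function.comp_def]
    _ = ((L q).map fun x => (x.1 : R) * ∑ q', c q' * A q' x.2).sum := by
      induction L q with
      | nil => simp
      | cons x l ih => simp [mul_add, Finset.sum_add_distrib, ih, Finset.mul_sum, mul_left_comm]
    _ = 0 := by simp [hφ]

/-- The value of `u*_{s 0} ∧ u*_{s 1} ∧ u*_{s 2}` on `(u_{t 0}, u_{t 1}, u_{t 2})`. -/
def wedgeCoeff {κ : Type*} [DecidableEq κ] (s t : Fin 3 → κ) : ℤ :=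
  (Matrix.of fun i j => if s i = t j then 1 else 0).det

namespace ExteriorAlgebra

variable {R M : Type*} [CommRing R] [AddCommGroup M] [Module R M]

noncomputable def evalTriple (v : Fin 3 → M) : ExteriorAlgebra R (Module.Dual R M) →ₗ[R] R :=
  liftAlternating <| Pi.single 3 <|
    Matrix.detRowAlternating.compLinearMap (LinearMap.pi fun j => Module.Dual.eval R M (v j))

theorem evalTriple_ι_mul_ι_mul_ι (v : Fin 3 → M) (a b c : Module.Dual R M) :
    evalTriple v (ι R a * ι R b * ι R c) = (Matrix.of fun i j => ![a, b, c] i (v j)).det := by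
  have hιMulti : ι R a * ι R b * ι R c = ιMulti R 3 ![a, b, c] := by
    simp [ιMulti_apply, mul_assoc]
  rw [evalTriple, hιMulti, liftAlternating_apply_ιMulti, Pi.single_eq_same]
  rfl

theorem evalTriple_basis_coord {κ : Type*} [DecidableEq κ] (u : Module.Basis κ R M)
    (t : Fin 3 → κ) (a b c : κ) :
    evalTriple (u ∘ t) (ι R (u.coord a) * ι R (u.coord b) * ι R (u.coord c)) =
      wedgeCoeff ![a, b, c] t := by
  rw [evalTriple_ι_mul_ι_mul_ι, wedgeCoeff, Int.cast_det]
  congr 1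
  ext i j
  fin_cases i <;> simp [Finsupp.single_apply, eq_comm]

end ExteriorAlgebra

section SixDimensional

variable {R M : Type*} [CommRing R] [AddCommGroup M] [Module R M]

noncomputable def basicTwoForms (u : Module.Basis (Fin 6) R M) :
    Fin 3 → ExteriorAlgebra R (Module.Dual R M) :=
  ![ι R (u.coord 0) * ι R (u.coord 1) + ι R (u.coord 2) * ι R (u.coord 3),
    ι R (u.coord 0) * ι R (u.coord 3) + ι R (u.coord 1) * ι R (u.coord 4)
      + ι R (u.coord 2) * ι R (u.coord 5),
    ι R (u.coord 2) * ι R (u.coord 4) + ι R (u.coord 3) * ι R (u.coord 5)]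

def spanningCoeff (q : Fin 3 × Fin 6) (t : Fin 3 → Fin 6) : ℤ :=
  ![wedgeCoeff ![0, 1, q.2] t + wedgeCoeff ![2, 3, q.2] t,
    wedgeCoeff ![0, 3, q.2] t + wedgeCoeff ![1, 4, q.2] t + wedgeCoeff ![2, 5, q.2] t,
    wedgeCoeff ![2, 4, q.2] t + wedgeCoeff ![3, 5, q.2] t] q.1

/-- Entry `(i, j)` expresses the coefficient `c (i, j)` of a relation among the `fᵢ ∧ uⱼ*` as a
signed sum of its coordinates on basis triples `t`. -/
def coeffReadout : Fin 3 × Fin 6 → List (ℤ × (Fin 3 → Fin 6)) := fun q =>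
  ![![[(1, ![0, 2, 3]), (-1, ![1, 2, 4]), (1, ![1, 3, 5])], [(1, ![1, 2, 3])], [(1, ![0, 1, 2])],
      [(1, ![0, 1, 3]), (1, ![1, 2, 5])], [(1, ![0, 1, 4]), (-1, ![0, 2, 5])], [(1, ![0, 1, 5])]],
    ![[(1, ![0, 2, 5])], [(1, ![1, 2, 5])], [(-1, ![1, 2, 4]), (1, ![1, 3, 5])],
      [(-1, ![1, 3, 4])], [(1, ![0, 3, 4])], [(-1, ![0, 2, 4]), (1, ![0, 3, 5])]],
    ![[(1, ![0, 2, 4])], [(1, ![1, 3, 5])], [(-1, ![0, 1, 5]), (-1, ![1, 3, 4]), (1, ![2, 3, 5])],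
      [(1, ![0, 1, 4]), (-1, ![0, 2, 5]), (-1, ![2, 3, 4])], [(-1, ![3, 4, 5])],
      [(1, ![0, 3, 4]), (1, ![2, 4, 5])]]] q.1 q.2

theorem spanningCoeff_readout (q q' : Fin 3 × Fin 6) :
    ((coeffReadout q).map fun x => x.1 * spanningCoeff q' x.2).sum = if q = q' then 1 else 0 := by
  revert q q'
  -- the kernel evaluates the explicit 3 × 3 formula far faster than `Matrix.det`
  simp only [spanningCoeff, wedgeCoeff, Matrix.det_fin_three, Matrix.of_apply]
  decide +kernel

theorem evalTriple_basicTwoForms_mul (u : Module.Basis (Fin 6) R M) (q : Fin 3 × Fin 6)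
    (t : Fin 3 → Fin 6) :
    evalTriple (u ∘ t) (basicTwoForms u q.1 * ι R (u.coord q.2)) = spanningCoeff q t := by
  obtain ⟨i, j⟩ := q
  fin_cases i <;> simp [basicTwoForms, spanningCoeff, add_mul, evalTriple_basis_coord]

theorem linearIndependent_basicTwoForms_mul (u : Module.Basis (Fin 6) R M) :
    LinearIndependent R fun q : Fin 3 × Fin 6 => basicTwoForms u q.1 * ι R (u.coord q.2) :=
  linearIndependent_of_int_leftInverse (fun t => evalTriple (u ∘ t)) spanningCoeff
    (evalTriple_basicTwoForms_mul u) coeffReadout spanningCoeff_readout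

end SixDimensional

theorem stmt_3_general (p : ℕ) [Fact p.Prime] (U : Type*) [AddCommGroup U]
    [Module (ZMod p) U] (u : Module.Basis (Fin 6) (ZMod p) U) :
    let F := ZMod p
    let ι' : Module.Dual F U → ExteriorAlgebra F (Module.Dual F U) := ι F
    let f : Fin 3 → ExteriorAlgebra F (Module.Dual F U) :=
      ![ι' (u.coord 0) * ι' (u.coord 1) + ι' (u.coord 2) * ι' (u.coord 3),
        ι' (u.coord 0) * ι' (u.coord 3) + ι' (u.coord 1) * ι' (u.coord 4)
          + ι' (u.coord 2) * ι' (u.coord 5),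
        ι' (u.coord 2) * ι' (u.coord 4) + ι' (u.coord 3) * ι' (u.coord 5)]
    let K₃ : Submodule F (ExteriorAlgebra F (Module.Dual F U)) :=
      Submodule.span F {x | ∃ i : Fin 3, ∃ j : Fin 6, x = f i * ι' (u.coord j)}
    Module.finrank F K₃ = 18 := by
  intro F ι' f K₃
  have hK : K₃ = Submodule.span F
      (Set.range fun q : Fin 3 × Fin 6 => basicTwoForms u q.1 * ι F (u.coord q.2)) := by
    simp only [K₃]
    congr 1
    ext x
    simp [eq_comm, f, ι', basicTwoForms]
  rw [hK, finrank_span_eq_card (linearIndependent_basicTwoForms_mul u)]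
  simp

/-- Let `U` be a 6-dimensional `F_p`-vector space with basis `u₁,…,u₆`, and in `Λ²U*` set
`f₁ = u₁*∧u₂* + u₃*∧u₄*`, `f₂ = u₁*∧u₄* + u₂*∧u₅* + u₃*∧u₆*`, `f₃ = u₃*∧u₅* + u₄*∧u₆*`.
Let `K³ = span{ fᵢ ∧ uⱼ* : 1 ≤ i ≤ 3, 1 ≤ j ≤ 6 } ⊆ Λ³U*`.  Then `dim K³ = 18`. -/
theorem stmt_3 (p : ℕ) [Fact p.Prime] (hp2 : p ≠ 2) (U : Type*) [AddCommGroup U]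
    [Module (ZMod p) U] (u : Module.Basis (Fin 6) (ZMod p) U) :
    let F := ZMod p
    let ι' : Module.Dual F U → ExteriorAlgebra F (Module.Dual F U) := ι F
    let f : Fin 3 → ExteriorAlgebra F (Module.Dual F U) :=
      ![ι' (u.coord 0) * ι' (u.coord 1) + ι' (u.coord 2) * ι' (u.coord 3),
        ι' (u.coord 0) * ι' (u.coord 3) + ι' (u.coord 1) * ι' (u.coord 4)
          + ι' (u.coord 2) * ι' (u.coord 5),
        ι' (u.coord 2) * ι' (u.coord 4) + ι' (u.coord 3) * ι' (u.coord 5)]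
    let K₃ : Submodule F (ExteriorAlgebra F (Module.Dual F U)) :=
      Submodule.span F {x | ∃ i : Fin 3, ∃ j : Fin 6, x = f i * ι' (u.coord j)}
    Module.finrank F K₃ = 18 :=
  stmt_3_general p U u
end

section
/- Let U be a 6-dimensional F_p-vector space with basis u₁,...,u₆, let K³ ⊆ Λ³U* be spanned by fᵢ ∧ uⱼ* (1 ≤ i ≤ 3, 1 ≤ j ≤ 6) where f₁ = u₁*∧u₂* + u₃*∧u₄*, f₂ = u₁*∧u₄* + u₂*∧u₅* + u₃*∧u₆*, f₃ = u₃*∧u₅* + u₄*∧u₆*, and let S³ = (K³)^⊥ ⊆ Λ³U under the non-degenerate pairing Λ³U × Λ³U* → F_p. Then S³ is the 2-dimensional space spanned by w₁ = u₁∧u₅∧u₆ and w₂ = u₁∧u₃∧u₅ − u₁∧u₄∧u₆ + u₂∧u₅∧u₆. -/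
/-!
The twenty wedges `u_a ∧ u_b ∧ u_c` (`a < b < c`) are biorthogonal to the pairings with
`u_a* ∧ u_b* ∧ u_c*`, hence a basis of Λ³U by counting. In this basis the eighteen
conditions `⟨⟨x, fᵢ ∧ uⱼ*⟩⟩ = 0` become an integer linear system `M c = 0`. The coordinate
vectors `C` of `w₁, w₂` solve it, and an integer matrix `A` with `A M + C E = 1`, where `E`
reads off the coordinates of `x` at `u₁∧u₅∧u₆` and `u₁∧u₃∧u₅`, shows that every solution is
`C (E c)`. So the kernel is spanned by `w₁, w₂`, which are independent because `E C = 1`.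
-/

open ExteriorAlgebra

open Matrix

namespace Matrix

variable {R m n k : Type*} [CommRing R] [Fintype m] [Fintype n] [Fintype k]

theorem ker_mulVecLin_eq_range_of_mul_add_mul_eq_one [DecidableEq n] {M : Matrix m n R}
    {A : Matrix n m R} {C : Matrix n k R} {E : Matrix k n R} (hMC : M * C = 0)
    (h : A * M + C * E = 1) : LinearMap.ker M.mulVecLin = LinearMap.range C.mulVecLin := by
  ext x
  simp only [LinearMap.mem_ker, LinearMap.mem_range, mulVecLin_apply]
  constructor
  · intro hx
    refine ⟨E *ᵥ x, ?_⟩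
    calc C *ᵥ (E *ᵥ x) = (A * M + C * E) *ᵥ x := by
          rw [add_mulVec, ← mulVec_mulVec, ← mulVec_mulVec, hx, mulVec_zero, zero_add]
      _ = x := by rw [h, one_mulVec]
  · rintro ⟨y, rfl⟩
    rw [mulVec_mulVec, hMC, zero_mulVec]

theorem mulVecLin_injective_of_mul_eq_one [DecidableEq k] {C : Matrix n k R} {E : Matrix k n R}
    (h : E * C = 1) : Function.Injective C.mulVecLin := fun x y hxy => by
  simpa [mulVec_mulVec, h] using congrArg (E *ᵥ ·) hxy

end Matrix

theorem Submodule.comap_linearCombination_iInf_ker {R V m n : Type*} [CommRing R]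
    [AddCommGroup V] [Module R V] [Fintype n] (v : n → V) (φ : m → V →ₗ[R] R) :
    (⨅ i, LinearMap.ker (φ i)).comap (Fintype.linearCombination R v)
      = LinearMap.ker (of fun i s => φ i (v s)).mulVecLin := by
  ext c
  simp [Submodule.mem_iInf, Fintype.linearCombination_apply, funext_iff, mulVec, dotProduct,
    mul_comm]

theorem ExteriorAlgebra.ιMulti_three {R M : Type*} [CommRing R] [AddCommGroup M] [Module R M]
    (v : Fin 3 → M) :
    ιMulti R 3 v = ι R (v 0) * ι R (v 1) * ι R (v 2) := by
  rw [ιMulti_apply]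
  simp [List.ofFn_succ, mul_assoc]

def kroneckerMinor {d : ℕ} {ι : Type*} [DecidableEq ι] (a r : Fin d → ι) : ℤ :=
  (of fun i j => if r i = a j then 1 else 0).det

section Pairing

variable {F U ι : Type*} [Field F] [AddCommGroup U] [Module F U]

theorem pairDual_ιMulti {d : ℕ} (f : Fin d → Module.Dual F U) (v : Fin d → U) :
    pairDual F U d f (ιMulti F d v) = (of fun i j => f j (v i)).det := by
  rw [pairDual, liftAlternating_apply_ιMulti, Pi.single_eq_same]
  rfl

theorem pairDual_coord_ιMulti [DecidableEq ι] (u : Module.Basis ι F U) {d : ℕ}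
    (a r : Fin d → ι) :
    pairDual F U d (fun i => u.coord (a i)) (ιMulti F d fun i => u (r i))
      = kroneckerMinor a r := by
  rw [pairDual_ιMulti, kroneckerMinor, Int.cast_det]
  congr 1
  ext i j
  simp [Finsupp.single_apply, apply_ite]

theorem pairDual_coord_three [DecidableEq ι] (u : Module.Basis ι F U) (a b c : ι)
    (r : Fin 3 → ι) :
    pairDual F U 3 ![u.coord a, u.coord b, u.coord c] (ιMulti F 3 fun i => u (r i))
      = kroneckerMinor ![a, b, c] r := by
  rw [← pairDual_coord_ιMulti u ![a, b, c] r]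
  congr
  ext k
  fin_cases k <;> rfl

end Pairing

def triple : Fin 20 → Fin 3 → Fin 6 :=
  ![![0, 1, 2], ![0, 1, 3], ![0, 1, 4], ![0, 1, 5], ![0, 2, 3], ![0, 2, 4], ![0, 2, 5],
    ![0, 3, 4], ![0, 3, 5], ![0, 4, 5], ![1, 2, 3], ![1, 2, 4], ![1, 2, 5], ![1, 3, 4],
    ![1, 3, 5], ![1, 4, 5], ![2, 3, 4], ![2, 3, 5], ![2, 4, 5], ![3, 4, 5]]

theorem kroneckerMinor_triple (s t : Fin 20) :
    kroneckerMinor (triple t) (triple s) = if s = t then 1 else 0 := by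
  revert s t
  decide

section TripleWedge

variable {F U : Type*} [Field F] [AddCommGroup U] [Module F U] (u : Module.Basis (Fin 6) F U)

noncomputable def tripleWedge (s : Fin 20) : ExteriorAlgebra F U :=
  ιMulti F 3 fun i => u (triple s i)

theorem linearIndependent_tripleWedge : LinearIndependent F (tripleWedge u) :=
  .of_pairwise_dual_eq_zero_one _ (fun t => pairDual F U 3 fun i => u.coord (triple t i))
    (fun t s hts => by
      simp only [tripleWedge, pairDual_coord_ιMulti, kroneckerMinor_triple, if_neg hts.symm,
        Int.cast_zero])
    (fun t => by
      simp only [tripleWedge, pairDual_coord_ιMulti, kroneckerMinor_triple, if_pos,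
        Int.cast_one])

theorem span_tripleWedge :
    Submodule.span F (Set.range (tripleWedge u)) = ⋀[F]^3 U := by
  have := Module.Finite.of_basis u
  refine Submodule.eq_of_le_of_finrank_eq ?_ ?_
  · exact Submodule.span_le.2 <| Set.range_subset_iff.2 fun s => ιMulti_range F 3 ⟨_, rfl⟩
  · rw [finrank_span_eq_card (linearIndependent_tripleWedge u), exteriorPower.finrank_eq,
      Module.finrank_eq_card_basis u]
    rfl

end TripleWedge

def constraintMatrix : Matrix (Fin 3 × Fin 6) (Fin 20) ℤ := of fun ij s =>
  let κ a b := kroneckerMinor ![a, b, ij.2] (triple s)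
  ![κ 0 1 + κ 2 3, κ 0 3 + κ 1 4 + κ 2 5, κ 2 4 + κ 3 5] ij.1

def kernelBasis : Matrix (Fin 2) (Fin 20) ℤ :=
  !![0, 0, 0, 0, 0, 0, 0, 0, 0, 1, 0, 0, 0, 0, 0, 0, 0, 0, 0, 0;
     0, 0, 0, 0, 0, 1, 0, 0, -1, 0, 0, 0, 0, 0, 0, 1, 0, 0, 0, 0]

def freeCoords : Matrix (Fin 2) (Fin 20) ℤ := of fun k s => if s = ![9, 5] k then 1 else 0

def eliminationMatrix : Matrix (Fin 20) (Fin 3 × Fin 6) ℤ := of fun s ij =>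
  ![![![0, 0, 1, 0, 0, 0], ![0, 0, 0, 0, 0, 0], ![0, 0, 0, 0, 0, 0]],
    ![![0, 0, 0, 1, 0, 0], ![0, 0, 0, 0, 0, 0], ![0, 0, 0, 0, 0, 0]],
    ![![0, 0, 0, 0, 1, 0], ![0, 0, 0, 0, 0, 0], ![0, 0, 0, 1, 0, 0]],
    ![![0, 0, 0, 0, 0, 1], ![0, 0, 0, 0, 0, 0], ![0, 0, -1, 0, 0, 0]],
    ![![1, 0, 0, 0, 0, 0], ![0, 0, 0, 0, 0, 0], ![0, 0, 0, 0, 0, 0]],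
    ![![0, 0, 0, 0, 0, 0], ![0, 0, 0, 0, 0, 0], ![0, 0, 0, 0, 0, 0]],
    ![![0, 0, 0, 0, -1, 0], ![1, 0, 0, 0, 0, 0], ![0, 0, 0, -1, 0, 0]],
    ![![0, 0, 0, 0, 0, 0], ![0, 0, 0, 0, 1, 0], ![0, 0, 0, 0, 0, 1]],
    ![![0, 0, 0, 0, 0, 0], ![0, 0, 0, 0, 0, 0], ![1, 0, 0, 0, 0, 0]],
    ![![0, 0, 0, 0, 0, 0], ![0, 0, 0, 0, 0, 0], ![0, 0, 0, 0, 0, 0]],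
    ![![0, 1, 0, 0, 0, 0], ![0, 0, 0, 0, 0, 0], ![0, 0, 0, 0, 0, 0]],
    ![![-1, 0, 0, 0, 0, 0], ![0, 0, -1, 0, 0, 0], ![0, 0, 0, 0, 0, 0]],
    ![![0, 0, 0, 1, 0, 0], ![0, 1, 0, 0, 0, 0], ![0, 0, 0, 0, 0, 0]],
    ![![0, 0, 0, 0, 0, 0], ![0, 0, 0, -1, 0, 0], ![0, 0, -1, 0, 0, 0]],
    ![![1, 0, 0, 0, 0, 0], ![0, 0, 1, 0, 0, 0], ![0, 1, 0, 0, 0, 0]],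
    ![![0, 0, 0, 0, 0, 0], ![0, 0, 0, 0, 0, 1], ![-1, 0, 0, 0, 0, 0]],
    ![![0, 0, 0, 0, 0, 0], ![0, 0, 0, 0, 0, 0], ![0, 0, 0, -1, 0, 0]],
    ![![0, 0, 0, 0, 0, 0], ![0, 0, 0, 0, 0, 0], ![0, 0, 1, 0, 0, 0]],
    ![![0, 0, 0, 0, 0, 0], ![0, 0, 0, 0, 0, 0], ![0, 0, 0, 0, 0, 1]],
    ![![0, 0, 0, 0, 0, 0], ![0, 0, 0, 0, 0, 0], ![0, 0, 0, 0, -1, 0]]] s ij.1 ij.2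

theorem constraintMatrix_mul_kernelBasis_transpose : constraintMatrix * kernelBasisᵀ = 0 := by
  decide

theorem freeCoords_mul_kernelBasis_transpose : freeCoords * kernelBasisᵀ = 1 := by
  decide

theorem eliminationMatrix_mul_constraintMatrix_add : eliminationMatrix * constraintMatrix
    + kernelBasisᵀ * freeCoords = 1 := by
  decide

section Kernel

variable (R : Type*) [CommRing R]

theorem ker_constraintMatrix_mulVecLin :
    LinearMap.ker (constraintMatrix.map (Int.castRingHom R)).mulVecLin
      = LinearMap.range (kernelBasisᵀ.map (Int.castRingHom R)).mulVecLin := by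
  let f := Int.castRingHom R
  refine ker_mulVecLin_eq_range_of_mul_add_mul_eq_one (A := eliminationMatrix.map f)
    (E := freeCoords.map f) ?_ ?_
  · rw [← Matrix.map_mul, constraintMatrix_mul_kernelBasis_transpose,
      Matrix.map_zero _ (map_zero f)]
  · rw [← Matrix.map_mul, ← Matrix.map_mul, ← Matrix.map_add _ (map_add f),
      eliminationMatrix_mul_constraintMatrix_add, Matrix.map_one _ (map_zero f) (map_one f)]

theorem kernelBasis_transpose_mulVecLin_injective :
    Function.Injective (kernelBasisᵀ.map (Int.castRingHom R)).mulVecLin := by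
  let f := Int.castRingHom R
  refine mulVecLin_injective_of_mul_eq_one (E := freeCoords.map f) ?_
  rw [← Matrix.map_mul, freeCoords_mul_kernelBasis_transpose,
    Matrix.map_one _ (map_zero f) (map_one f)]

end Kernel

section Constraints

variable {F U : Type*} [Field F] [AddCommGroup U] [Module F U] (u : Module.Basis (Fin 6) F U)

/-- `constraintForm u i j = ⟨⟨·, f_{i+1} ∧ u_{j+1}*⟩⟩`, with `f_{i+1}` expanded into decomposable
2-forms. -/
noncomputable def constraintForm (i : Fin 3) (j : Fin 6) : ExteriorAlgebra F U →ₗ[F] F :=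
  ![pairDual F U 3 ![u.coord 0, u.coord 1, u.coord j]
      + pairDual F U 3 ![u.coord 2, u.coord 3, u.coord j],
    pairDual F U 3 ![u.coord 0, u.coord 3, u.coord j]
      + pairDual F U 3 ![u.coord 1, u.coord 4, u.coord j]
      + pairDual F U 3 ![u.coord 2, u.coord 5, u.coord j],
    pairDual F U 3 ![u.coord 2, u.coord 4, u.coord j]
      + pairDual F U 3 ![u.coord 3, u.coord 5, u.coord j]] i

noncomputable def annihilatorGens : Fin 2 → ExteriorAlgebra F U :=
  let e : Fin 6 → ExteriorAlgebra F U := fun i => ι F (u i)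
  ![e 0 * e 4 * e 5, e 0 * e 2 * e 4 - e 0 * e 3 * e 5 + e 1 * e 4 * e 5]

theorem constraintForm_tripleWedge (i : Fin 3) (j : Fin 6) (s : Fin 20) :
    constraintForm u i j (tripleWedge u s) = constraintMatrix (i, j) s := by
  fin_cases i <;>
    simp only [constraintForm, constraintMatrix, of_apply, Fin.zero_eta, Fin.mk_one,
      Fin.reduceFinMk, cons_val_zero, cons_val_one, cons_val_two, head_cons, tail_cons,
      LinearMap.add_apply, tripleWedge, pairDual_coord_three, Int.cast_add]

theorem comap_iInf_ker_constraintForm :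
    (⨅ i, ⨅ j, LinearMap.ker (constraintForm u i j)).comap
        (Fintype.linearCombination F (tripleWedge u))
      = LinearMap.range (kernelBasisᵀ.map (Int.castRingHom F)).mulVecLin := by
  rw [← iInf_prod (f := fun ij : Fin 3 × Fin 6 => LinearMap.ker (constraintForm u ij.1 ij.2)),
    Submodule.comap_linearCombination_iInf_ker, ← ker_constraintMatrix_mulVecLin]
  congr
  ext ij s
  exact constraintForm_tripleWedge u ij.1 ij.2 s

theorem linearCombination_annihilatorGens :
    Fintype.linearCombination F (annihilatorGens u)
      = Fintype.linearCombination F (tripleWedge u)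
          ∘ₗ (kernelBasisᵀ.map (Int.castRingHom F)).mulVecLin := by
  have h₀ : annihilatorGens u 0 = tripleWedge u 9 := by
    rw [tripleWedge, ιMulti_three]
    rfl
  have h₁ : annihilatorGens u 1 = tripleWedge u 5 - tripleWedge u 8 + tripleWedge u 15 := by
    simp only [tripleWedge, ιMulti_three]
    rfl
  ext k
  fin_cases k <;>
    simp [h₀, h₁, Fintype.linearCombination_apply, Fin.sum_univ_succ, kernelBasis,
      sub_eq_add_neg, add_assoc]

theorem span_annihilatorGens :
    Submodule.span F (Set.range (annihilatorGens u))
      = ⋀[F]^3 U ⊓ ⨅ i, ⨅ j, LinearMap.ker (constraintForm u i j) := by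
  rw [← Fintype.range_linearCombination F (annihilatorGens u), linearCombination_annihilatorGens,
    LinearMap.range_comp, ← comap_iInf_ker_constraintForm u, Submodule.map_comap_eq,
    Fintype.range_linearCombination, span_tripleWedge]

theorem linearIndependent_annihilatorGens : LinearIndependent F (annihilatorGens u) := by
  rw [linearIndependent_iff_injective_fintypeLinearCombination, linearCombination_annihilatorGens]
  exact (linearIndependent_tripleWedge u).fintypeLinearCombination_injective.comp
    (kernelBasis_transpose_mulVecLin_injective F)

end Constraints

theorem stmt_4_general (p : ℕ) [Fact p.Prime] (U : Type*) [AddCommGroup U]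
    [Module (ZMod p) U] (u : Module.Basis (Fin 6) (ZMod p) U) :
    let F := ZMod p
    let φ : Fin 3 → Fin 6 → (ExteriorAlgebra F U →ₗ[F] F) := fun i j =>
      ![pairDual F U 3 ![u.coord 0, u.coord 1, u.coord j]
          + pairDual F U 3 ![u.coord 2, u.coord 3, u.coord j],
        pairDual F U 3 ![u.coord 0, u.coord 3, u.coord j]
          + pairDual F U 3 ![u.coord 1, u.coord 4, u.coord j]
          + pairDual F U 3 ![u.coord 2, u.coord 5, u.coord j],
        pairDual F U 3 ![u.coord 2, u.coord 4, u.coord j]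
          + pairDual F U 3 ![u.coord 3, u.coord 5, u.coord j]] i
    let S₃ : Submodule F (ExteriorAlgebra F U) :=
      ⋀[F]^3 U ⊓ ⨅ i : Fin 3, ⨅ j : Fin 6, LinearMap.ker (φ i j)
    let e : Fin 6 → ExteriorAlgebra F U := fun i => ι F (u i)
    let w₁ := e 0 * e 4 * e 5
    let w₂ := e 0 * e 2 * e 4 - e 0 * e 3 * e 5 + e 1 * e 4 * e 5
    S₃ = Submodule.span F {w₁, w₂} ∧ Module.finrank F S₃ = 2 := by
  intro F φ S₃ e w₁ w₂
  have hS : S₃ = Submodule.span F {w₁, w₂} := by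
    rw [← range_cons_cons_empty]
    exact (span_annihilatorGens u).symm
  refine ⟨hS, ?_⟩
  rw [hS, ← range_cons_cons_empty]
  exact (finrank_span_eq_card (linearIndependent_annihilatorGens u)).trans (Fintype.card_fin 2)

/-- With `f₁ = u₁*∧u₂* + u₃*∧u₄*`, `f₂ = u₁*∧u₄* + u₂*∧u₅* + u₃*∧u₆*`,
`f₃ = u₃*∧u₅* + u₄*∧u₆*` and `K³ = span{fᵢ∧uⱼ*} ⊆ Λ³U*`, the annihilator
`S³ = (K³)^⊥ ⊆ Λ³U` (the common kernel in `Λ³U` of the functionals `⟨⟨·, fᵢ∧uⱼ*⟩⟩`)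
is the 2-dimensional space spanned by `w₁ = u₁∧u₅∧u₆` and
`w₂ = u₁∧u₃∧u₅ − u₁∧u₄∧u₆ + u₂∧u₅∧u₆`. -/
theorem stmt_4 (p : ℕ) [Fact p.Prime] (hp2 : p ≠ 2) (U : Type*) [AddCommGroup U]
    [Module (ZMod p) U] (u : Module.Basis (Fin 6) (ZMod p) U) :
    let F := ZMod p
    let φ : Fin 3 → Fin 6 → (ExteriorAlgebra F U →ₗ[F] F) := fun i j =>
      ![pairDual F U 3 ![u.coord 0, u.coord 1, u.coord j]
          + pairDual F U 3 ![u.coord 2, u.coord 3, u.coord j],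
        pairDual F U 3 ![u.coord 0, u.coord 3, u.coord j]
          + pairDual F U 3 ![u.coord 1, u.coord 4, u.coord j]
          + pairDual F U 3 ![u.coord 2, u.coord 5, u.coord j],
        pairDual F U 3 ![u.coord 2, u.coord 4, u.coord j]
          + pairDual F U 3 ![u.coord 3, u.coord 5, u.coord j]] i
    let S₃ : Submodule F (ExteriorAlgebra F U) :=
      ⋀[F]^3 U ⊓ ⨅ i : Fin 3, ⨅ j : Fin 6, LinearMap.ker (φ i j)
    let e : Fin 6 → ExteriorAlgebra F U := fun i => ι F (u i)
    let w₁ := e 0 * e 4 * e 5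
    let w₂ := e 0 * e 2 * e 4 - e 0 * e 3 * e 5 + e 1 * e 4 * e 5
    S₃ = Submodule.span F {w₁, w₂} ∧ Module.finrank F S₃ = 2 :=
  stmt_4_general p U u
end

section
/- Let U be a 6-dimensional F_p-vector space with basis u₁,...,u₆, and let S³ ⊆ Λ³U be the span of w₁ = u₁∧u₅∧u₆ and w₂ = u₁∧u₃∧u₅ − u₁∧u₄∧u₆ + u₂∧u₅∧u₆. Then the subspace of S³ spanned by elements of S³ of the form u'∧u (u' ∈ Λ²U, u ∈ U) equals span{w₁}; in particular, it is a proper 1-codimensional subspace of S³. -/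
/-!
Write `x = a w₁ + b w₂` for an element of `S³`. If `x = u' ∧ v` then `x ∧ v = 0`, and reading off
six of the `4 × 4` minors of `x ∧ v` in the basis `u` forces every coordinate of `v` to vanish as
soon as `b ≠ 0`. So the only elements of `S³` divisible by a vector are the multiples of
`w₁ = (u₁ ∧ u₅) ∧ u₆`, while `w₁` and `w₂` are independent because their minors on
`{u₁, u₅, u₆}` and `{u₁, u₃, u₅}` form the identity matrix.
-/

open ExteriorAlgebra Module Submodule

namespace ExteriorAlgebra

variable {R M I : Type*} [CommRing R] [AddCommGroup M] [Module R M]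

noncomputable def basisMinor (b : Basis I R M) {n : ℕ} (s : Fin n → I) :
    ExteriorAlgebra R M →ₗ[R] R :=
  liftAlternating (Pi.single n (Matrix.detRowAlternating.compLinearMap
    (LinearMap.pi fun j => b.coord (s j))))

theorem basisMinor_ιMulti (b : Basis I R M) {n : ℕ} (s : Fin n → I) (v : Fin n → M) :
    basisMinor b s (ιMulti R n v) = (Matrix.of fun i j => b.repr (v i) (s j)).det := by
  rw [basisMinor, liftAlternating_apply_ιMulti, Pi.single_eq_same]
  rfl

theorem ι_mul_ι_eq_ιMulti (x y : M) : ι R x * ι R y = ιMulti R 2 ![x, y] := by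
  simp [ιMulti_apply]

theorem ι_mul_ι_mul_ι_eq_ιMulti (x y z : M) :
    ι R x * ι R y * ι R z = ιMulti R 3 ![x, y, z] := by
  simp [ιMulti_apply, mul_assoc]

theorem ι_mul_ι_mul_ι_mul_ι_eq_ιMulti (x y z t : M) :
    ι R x * ι R y * ι R z * ι R t = ιMulti R 4 ![x, y, z, t] := by
  simp [ιMulti_apply, mul_assoc]

def decomposableSpan (S : Submodule R (ExteriorAlgebra R M)) : Submodule R (ExteriorAlgebra R M) :=
  span R {x | x ∈ S ∧ ∃ u' ∈ ⋀[R]^2 M, ∃ v : M, x = u' * ι R v}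

theorem mul_ι_eq_zero_of_eq_mul_ι {x : ExteriorAlgebra R M} {u' : ExteriorAlgebra R M}
    {v : M} (hx : x = u' * ι R v) : x * ι R v = 0 := by
  rw [hx, mul_assoc, ι_sq_zero, mul_zero]

end ExteriorAlgebra

section Pair

variable {K V : Type*} [DivisionRing K] [AddCommGroup V] [Module K V] {x y : V}

theorem LinearIndependent.span_singleton_lt_span_pair (h : LinearIndependent K ![x, y]) :
    K ∙ x < span K {x, y} := by
  refine lt_of_le_of_ne (span_mono (Set.singleton_subset_iff.mpr (Set.mem_insert x _)))
    fun heq => ?_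
  have hy : y ∈ K ∙ x := heq ▸ subset_span (Set.mem_insert_of_mem x rfl)
  obtain ⟨c, rfl⟩ := mem_span_singleton.mp hy
  have := LinearIndependent.pair_iff.mp h c (-1) (by rw [neg_one_smul, add_neg_cancel])
  exact one_ne_zero (neg_eq_zero.mp this.2)

theorem LinearIndependent.finrank_span_pair (h : LinearIndependent K ![x, y]) :
    finrank K (span K {x, y}) = finrank K (K ∙ x) + 1 := by
  have hx : x ≠ 0 := h.ne_zero 0
  rw [finrank_span_singleton hx, ← Matrix.range_cons_cons_empty,
    finrank_span_eq_card h, Fintype.card_fin]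

end Pair

namespace SixDim

variable {R M : Type*} [CommRing R] [AddCommGroup M] [Module R M] (u : Basis (Fin 6) R M)

-- `u 0, …, u 5` are the basis vectors `u₁, …, u₆` of the statement.
noncomputable def w₁ : ExteriorAlgebra R M := ι R (u 0) * ι R (u 4) * ι R (u 5)

noncomputable def w₂ : ExteriorAlgebra R M :=
  ι R (u 0) * ι R (u 2) * ι R (u 4) - ι R (u 0) * ι R (u 3) * ι R (u 5) +
    ι R (u 1) * ι R (u 4) * ι R (u 5)

theorem basisMinor_w₁_w₂ :
    basisMinor u ![0, 4, 5] (w₁ u) = 1 ∧ basisMinor u ![0, 4, 5] (w₂ u) = 0 ∧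
      basisMinor u ![0, 2, 4] (w₁ u) = 0 ∧ basisMinor u ![0, 2, 4] (w₂ u) = 1 := by
  simp only [w₁, w₂, ι_mul_ι_mul_ι_eq_ιMulti, map_add, map_sub, basisMinor_ιMulti]
  simp [Matrix.det_fin_three]

theorem linearIndependent_w₁_w₂ : LinearIndependent R ![w₁ u, w₂ u] := by
  obtain ⟨h₁₁, h₁₂, h₂₁, h₂₂⟩ := basisMinor_w₁_w₂ u
  refine LinearIndependent.pair_iff.mpr fun s t hst => ⟨?_, ?_⟩
  · simpa [h₁₁, h₁₂] using congrArg (basisMinor u ![0, 4, 5]) hst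
  · simpa [h₂₁, h₂₂] using congrArg (basisMinor u ![0, 2, 4]) hst

theorem basisMinor_smul_add_smul_mul_ι (a b : R) (v : M) :
    let x := (a • w₁ u + b • w₂ u) * ι R v
    let c := u.repr v
    basisMinor u ![0, 1, 2, 4] x = b * c 1 ∧ basisMinor u ![0, 2, 3, 5] x = -(b * c 2) ∧
      basisMinor u ![0, 2, 3, 4] x = -(b * c 3) ∧
      basisMinor u ![0, 1, 4, 5] x = a * c 1 - b * c 0 ∧
      basisMinor u ![0, 3, 4, 5] x = a * c 3 + b * c 4 ∧
      basisMinor u ![0, 2, 4, 5] x = a * c 2 + b * c 5 := by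
  simp only [w₁, w₂, add_mul, sub_mul, smul_mul_assoc, ι_mul_ι_mul_ι_mul_ι_eq_ιMulti, map_add,
    map_sub, map_smul, basisMinor_ιMulti]
  refine ⟨?_, ?_, ?_, ?_, ?_, ?_⟩ <;>
    simp [Matrix.det_succ_row_zero, Fin.sum_univ_succ, Finsupp.single_apply, Fin.succAbove,
      sub_eq_add_neg]

theorem eq_zero_of_smul_add_smul_mul_ι_eq_zero [NoZeroDivisors R] {a b : R} (hb : b ≠ 0) {v : M}
    (h : (a • w₁ u + b • w₂ u) * ι R v = 0) : v = 0 := by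
  obtain ⟨m₁, m₂, m₃, m₀, m₄, m₅⟩ := basisMinor_smul_add_smul_mul_ι u a b v
  simp only [h, map_zero] at m₁ m₂ m₃ m₀ m₄ m₅
  have h₁ : u.repr v 1 = 0 := by simpa [hb] using m₁.symm
  have h₂ : u.repr v 2 = 0 := by simpa [hb] using m₂.symm
  have h₃ : u.repr v 3 = 0 := by simpa [hb] using m₃.symm
  have h₀ : u.repr v 0 = 0 := by simpa [h₁, hb] using m₀.symm
  have h₄ : u.repr v 4 = 0 := by simpa [h₃, hb] using m₄.symm
  have h₅ : u.repr v 5 = 0 := by simpa [h₂, hb] using m₅.symm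
  refine u.repr.map_eq_zero_iff.mp (Finsupp.ext fun i => ?_)
  fin_cases i <;> assumption

theorem decomposableSpan_span_pair [NoZeroDivisors R] :
    decomposableSpan (span R {w₁ u, w₂ u}) = R ∙ w₁ u := by
  refine le_antisymm (span_le.mpr ?_) (span_le.mpr ?_)
  · rintro x ⟨hxS, u', -, v, hx⟩
    obtain ⟨a, b, rfl⟩ := mem_span_pair.mp hxS
    by_cases hb : b = 0
    · simp [hb, mem_span_singleton]
    · have hv := eq_zero_of_smul_add_smul_mul_ι_eq_zero u hb (mul_ι_eq_zero_of_eq_mul_ι hx)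
      simp [hx, hv]
  · rintro _ rfl
    refine subset_span ⟨subset_span (Set.mem_insert _ _), ι R (u 0) * ι R (u 4), ?_, u 5, rfl⟩
    rw [ι_mul_ι_eq_ιMulti]
    exact ιMulti_range R 2 (Set.mem_range_self _)

end SixDim

theorem stmt_5_general (p : ℕ) [Fact p.Prime] (U : Type*) [AddCommGroup U]
    [Module (ZMod p) U] (u : Module.Basis (Fin 6) (ZMod p) U) :
    let e : Fin 6 → ExteriorAlgebra (ZMod p) U := fun i => ι (ZMod p) (u i)
    let w₁ := e 0 * e 4 * e 5
    let w₂ := e 0 * e 2 * e 4 - e 0 * e 3 * e 5 + e 1 * e 4 * e 5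
    let S₃ : Submodule (ZMod p) (ExteriorAlgebra (ZMod p) U) :=
      Submodule.span (ZMod p) {w₁, w₂}
    let S₃dec : Submodule (ZMod p) (ExteriorAlgebra (ZMod p) U) :=
      Submodule.span (ZMod p)
        {x | x ∈ S₃ ∧ ∃ u' ∈ ⋀[ZMod p]^2 U, ∃ v : U, x = u' * ι (ZMod p) v}
    S₃dec = Submodule.span (ZMod p) {w₁} ∧ S₃dec < S₃ ∧
      Module.finrank (ZMod p) S₃ = Module.finrank (ZMod p) S₃dec + 1 := by
  intro e w₁ w₂ S₃ S₃dec
  have hdec : S₃dec = ZMod p ∙ w₁ := SixDim.decomposableSpan_span_pair u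
  have hind : LinearIndependent (ZMod p) ![w₁, w₂] := SixDim.linearIndependent_w₁_w₂ u
  rw [hdec]
  exact ⟨rfl, hind.span_singleton_lt_span_pair, hind.finrank_span_pair⟩

/-- Let `U` be a 6-dimensional `F_p`-vector space with basis `u₁,…,u₆`, and
`S³ = span{w₁, w₂}` with `w₁ = u₁∧u₅∧u₆`, `w₂ = u₁∧u₃∧u₅ − u₁∧u₄∧u₆ + u₂∧u₅∧u₆`.
Then the span of the elements of `S³` of the form `u' ∧ u` (`u' ∈ Λ²U`, `u ∈ U`)
equals `span{w₁}`; in particular it is a proper subspace of codimension 1 in `S³`. -/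
theorem stmt_5 (p : ℕ) [Fact p.Prime] (hp2 : p ≠ 2) (U : Type*) [AddCommGroup U]
    [Module (ZMod p) U] (u : Module.Basis (Fin 6) (ZMod p) U) :
    let e : Fin 6 → ExteriorAlgebra (ZMod p) U := fun i => ι (ZMod p) (u i)
    let w₁ := e 0 * e 4 * e 5
    let w₂ := e 0 * e 2 * e 4 - e 0 * e 3 * e 5 + e 1 * e 4 * e 5
    let S₃ : Submodule (ZMod p) (ExteriorAlgebra (ZMod p) U) :=
      Submodule.span (ZMod p) {w₁, w₂}
    let S₃dec : Submodule (ZMod p) (ExteriorAlgebra (ZMod p) U) :=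
      Submodule.span (ZMod p)
        {x | x ∈ S₃ ∧ ∃ u' ∈ ⋀[ZMod p]^2 U, ∃ v : U, x = u' * ι (ZMod p) v}
    S₃dec = Submodule.span (ZMod p) {w₁} ∧ S₃dec < S₃ ∧
      Module.finrank (ZMod p) S₃ = Module.finrank (ZMod p) S₃dec + 1 :=
  stmt_5_general p U u
end

section
/- Let p be an odd prime and t ∈ F_p a nonzero element that is not a square. Let U be a 6-dimensional F_p-vector space with basis u₁,...,u₆, and set w₁ = u₁∧u₂∧u₃ + u₁∧u₅∧u₆ − t·u₂∧u₄∧u₆ + u₃∧u₄∧u₅ and w₂ = t·u₁∧u₂∧u₆ + t·u₂∧u₃∧u₄ + t·u₄∧u₅∧u₆ − u₁∧u₃∧u₅ in Λ³U. If a₁, a₂ ∈ F_p and u₀ ∈ U satisfy (a₁w₁ + a₂w₂) ∧ u₀ = 0 with a₁w₁ + a₂w₂ ≠ 0 and u₀ ≠ 0, then a contradiction follows; i.e., no nonzero element of span{w₁, w₂} is of the form u'∧u with u' ∈ Λ²U and u ∈ U. -/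
/-!
Write `c` for the coordinates of `u₀`. The coefficients of `(a₁ w₁ + a₂ w₂) ∧ u₀` on six suitable
basis 4-vectors say that each of the pairs `(x, y) = (c₀, c₃), (c₄, c₁), (c₂, c₅)` solves
`a₁ x = a₂ y`, `a₁ y = t a₂ x`. The determinant of this system is the norm form `a₁² - t a₂²`,
which vanishes only at `a₁ = a₂ = 0` because `t` is not a square; so `c = 0` unless the pencil
element is zero.
-/

open ExteriorAlgebra

theorem mul_self_sub_mul_mul_self_ne_zero {K : Type*} [Field K] {t a b : K} (ht : ¬IsSquare t)
    (hab : a ≠ 0 ∨ b ≠ 0) : a * a - t * (b * b) ≠ 0 := by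
  intro h
  rcases eq_or_ne b 0 with rfl | hb
  · simp_all
  · exact ht ⟨a / b, by field_simp; linear_combination -h⟩

theorem eq_zero_of_mul_eq_mul_of_mul_eq_mul {K : Type*} [Field K] {t a b x y : K}
    (ht : ¬IsSquare t) (hab : a ≠ 0 ∨ b ≠ 0) (h₁ : a * x = b * y) (h₂ : a * y = t * b * x) :
    x = 0 ∧ y = 0 := by
  have hd := mul_self_sub_mul_mul_self_ne_zero ht hab
  constructor
  · refine (mul_eq_zero.1 ?_).resolve_left hd
    linear_combination a * h₁ + b * h₂
  · refine (mul_eq_zero.1 ?_).resolve_left hd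
    linear_combination a * h₂ + t * b * h₁

namespace ExteriorAlgebra

variable {R M I : Type*} [CommRing R] [AddCommGroup M] [Module R M]

/-- For injective `s`, the coefficient of `b (s 0) * ⋯ * b (s (n - 1))` in the degree-`n` part. -/
noncomputable def basisCoord (b : Module.Basis I R M) {n : ℕ} (s : Fin n → I) :
    ExteriorAlgebra R M →ₗ[R] R :=
  liftAlternating fun m =>
    if h : m = n then
      h ▸ Matrix.detRowAlternating.compLinearMap (LinearMap.pi fun k => b.coord (s k))
    else 0

theorem basisCoord_ιMulti (b : Module.Basis I R M) {n : ℕ} (s : Fin n → I) (v : Fin n → M) :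
    basisCoord b s (ιMulti R n v) = (Matrix.of fun i k => b.repr (v i) (s k)).det := by
  rw [basisCoord, liftAlternating_apply_ιMulti, dif_pos rfl]
  rfl

theorem basisCoord_ι_mul_ι_mul_ι_mul_ι [DecidableEq I] (b : Module.Basis I R M)
    (s : Fin 4 → I) (i j k : I) (v : M) :
    basisCoord b s (ι R (b i) * ι R (b j) * ι R (b k) * ι R v) =
      (Matrix.of ![fun l => if i = s l then 1 else 0, fun l => if j = s l then 1 else 0,
        fun l => if k = s l then 1 else 0, fun l => b.repr v (s l)]).det := by
  have h : ι R (b i) * ι R (b j) * ι R (b k) * ι R v = ιMulti R 4 ![b i, b j, b k, v] := by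
    simp [ιMulti_apply, mul_assoc]
  rw [h, basisCoord_ιMulti]
  congr 1
  ext a l
  fin_cases a <;> simp [Finsupp.single_apply]

end ExteriorAlgebra

namespace TrivectorPencil

variable {K U : Type*} [Field K] [AddCommGroup U] [Module K U]

noncomputable def w₁ (t : K) (u : Module.Basis (Fin 6) K U) : ExteriorAlgebra K U :=
  let e : Fin 6 → ExteriorAlgebra K U := fun i => ι K (u i)
  e 0 * e 1 * e 2 + e 0 * e 4 * e 5 - t • (e 1 * e 3 * e 5) + e 2 * e 3 * e 4

noncomputable def w₂ (t : K) (u : Module.Basis (Fin 6) K U) : ExteriorAlgebra K U :=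
  let e : Fin 6 → ExteriorAlgebra K U := fun i => ι K (u i)
  t • (e 0 * e 1 * e 5) + t • (e 1 * e 2 * e 3) + t • (e 3 * e 4 * e 5) - e 0 * e 2 * e 4

set_option maxHeartbeats 1000000 in
theorem coord_relations_of_mul_ι_eq_zero (t : K) (u : Module.Basis (Fin 6) K U) (a₁ a₂ : K)
    (v : U) (h : (a₁ • w₁ t u + a₂ • w₂ t u) * ι K v = 0) :
    let c := u.repr v
    (a₁ * c 0 = a₂ * c 3 ∧ a₁ * c 3 = t * a₂ * c 0) ∧
    (a₁ * c 4 = a₂ * c 1 ∧ a₁ * c 1 = t * a₂ * c 4) ∧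
    (a₁ * c 2 = a₂ * c 5 ∧ a₁ * c 5 = t * a₂ * c 2) := by
  have key (s : Fin 4 → Fin 6) := congrArg (basisCoord u s) h
  simp only [w₁, w₂, add_mul, sub_mul, smul_mul_assoc, map_add, map_sub, map_smul, map_zero,
    basisCoord_ι_mul_ι_mul_ι_mul_ι] at key
  have h0234 := key ![0, 2, 3, 4]
  have h0123 := key ![0, 1, 2, 3]
  have h0124 := key ![0, 1, 2, 4]
  have h0145 := key ![0, 1, 4, 5]
  have h0245 := key ![0, 2, 4, 5]
  have h0125 := key ![0, 1, 2, 5]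
  simp [Matrix.det_succ_row_zero, Fin.sum_univ_succ,
    show (1 : Fin 4).succAbove 2 = 3 by decide] at h0234 h0123 h0124 h0145 h0245 h0125
  refine ⟨⟨?_, ?_⟩, ⟨?_, ?_⟩, ⟨?_, ?_⟩⟩
  · linear_combination -h0234
  · linear_combination h0123
  · linear_combination h0124
  · linear_combination h0145
  · linear_combination h0245
  · linear_combination h0125

theorem eq_zero_of_mul_ι_eq_zero {t : K} (ht : ¬IsSquare t) (u : Module.Basis (Fin 6) K U)
    {a₁ a₂ : K} (ha : a₁ ≠ 0 ∨ a₂ ≠ 0) {v : U}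
    (h : (a₁ • w₁ t u + a₂ • w₂ t u) * ι K v = 0) : v = 0 := by
  obtain ⟨⟨h03, h30⟩, ⟨h41, h14⟩, ⟨h25, h52⟩⟩ := coord_relations_of_mul_ι_eq_zero t u a₁ a₂ v h
  obtain ⟨hc0, hc3⟩ := eq_zero_of_mul_eq_mul_of_mul_eq_mul ht ha h03 h30
  obtain ⟨hc4, hc1⟩ := eq_zero_of_mul_eq_mul_of_mul_eq_mul ht ha h41 h14
  obtain ⟨hc2, hc5⟩ := eq_zero_of_mul_eq_mul_of_mul_eq_mul ht ha h25 h52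
  rw [← u.repr.map_eq_zero_iff]
  ext i
  fin_cases i <;> assumption

end TrivectorPencil

theorem stmt_7_general (p : ℕ) [Fact p.Prime] (t : ZMod p)
    (hts : ¬ IsSquare t) (U : Type*) [AddCommGroup U]
    [Module (ZMod p) U] (u : Module.Basis (Fin 6) (ZMod p) U)
    (a₁ a₂ : ZMod p) (u₀ : U) :
    let e : Fin 6 → ExteriorAlgebra (ZMod p) U := fun i => ι (ZMod p) (u i)
    let w₁ := e 0 * e 1 * e 2 + e 0 * e 4 * e 5 - t • (e 1 * e 3 * e 5) + e 2 * e 3 * e 4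
    let w₂ := t • (e 0 * e 1 * e 5) + t • (e 1 * e 2 * e 3) + t • (e 3 * e 4 * e 5)
      - e 0 * e 2 * e 4
    (a₁ • w₁ + a₂ • w₂) * ι (ZMod p) u₀ = 0 →
    a₁ • w₁ + a₂ • w₂ ≠ 0 → u₀ ≠ 0 → False := by
  intro e w₁ w₂ hmul hw hu₀
  have ha : a₁ ≠ 0 ∨ a₂ ≠ 0 := by
    contrapose! hw
    simp [hw.1, hw.2]
  exact hu₀ (TrivectorPencil.eq_zero_of_mul_ι_eq_zero hts u ha hmul)

/-- Let `p` be odd, `t ∈ F_p` nonzero and not a square, `U` a 6-dimensional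
`F_p`-vector space, `w₁ = u₁∧u₂∧u₃ + u₁∧u₅∧u₆ − t u₂∧u₄∧u₆ + u₃∧u₄∧u₅`,
`w₂ = t u₁∧u₂∧u₆ + t u₂∧u₃∧u₄ + t u₄∧u₅∧u₆ − u₁∧u₃∧u₅`.  If `(a₁w₁ + a₂w₂) ∧ u₀ = 0`
with `a₁w₁ + a₂w₂ ≠ 0` and `u₀ ≠ 0`, a contradiction follows; i.e. no nonzero element of
`span{w₁, w₂}` has the form `u' ∧ u`. -/
theorem stmt_7 (p : ℕ) [Fact p.Prime] (hp2 : p ≠ 2) (t : ZMod p) (ht : t ≠ 0)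
    (hts : ¬ IsSquare t) (U : Type*) [AddCommGroup U]
    [Module (ZMod p) U] (u : Module.Basis (Fin 6) (ZMod p) U)
    (a₁ a₂ : ZMod p) (u₀ : U) :
    let e : Fin 6 → ExteriorAlgebra (ZMod p) U := fun i => ι (ZMod p) (u i)
    let w₁ := e 0 * e 1 * e 2 + e 0 * e 4 * e 5 - t • (e 1 * e 3 * e 5) + e 2 * e 3 * e 4
    let w₂ := t • (e 0 * e 1 * e 5) + t • (e 1 * e 2 * e 3) + t • (e 3 * e 4 * e 5)
      - e 0 * e 2 * e 4
    (a₁ • w₁ + a₂ • w₂) * ι (ZMod p) u₀ = 0 →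
    a₁ • w₁ + a₂ • w₂ ≠ 0 → u₀ ≠ 0 → False :=
  stmt_7_general p t hts U u a₁ a₂ u₀
end

section
/- Let p be an odd prime and t = 1/c² for some nonzero c ∈ F_p. Let U be a 6-dimensional F_p-vector space with basis u₁,...,u₆, and set w₁ = u₁∧u₂∧u₃ + u₁∧u₅∧u₆ − t·u₂∧u₄∧u₆ + u₃∧u₄∧u₅ and w₂ = t·u₁∧u₂∧u₆ + t·u₂∧u₃∧u₄ + t·u₄∧u₅∧u₆ − u₁∧u₃∧u₅. Then the span of the elements of span{w₁, w₂} that can be written as u'∧u (u' ∈ Λ²U, u ∈ U) equals span{w₁, w₂}; explicitly, w₁ + c·w₂ and w₁ − c·w₂ are each of the form u'∧u. -/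
/-!
Over any commutative ring in which `s ^ 2 * t = 1`, the element `w₁ + s • w₂` factors as a
2-vector times the vector `s • u₃ + u₆`. Applying this with `s = ± c` exhibits both
`w₁ + c • w₂` and `w₁ - c • w₂` as decomposable in the required way, and since `2` and `c`
are invertible these two elements already span `span {w₁, w₂}`.
-/

open ExteriorAlgebra

section SpanPair

variable {K V : Type*} [Field K] [AddCommGroup V] [Module K V]

theorem mem_and_mem_of_add_smul_mem_of_sub_smul_mem {N : Submodule K V} {a b : V} {c : K}
    (h2 : (2 : K) ≠ 0) (hc : c ≠ 0) (hadd : a + c • b ∈ N) (hsub : a - c • b ∈ N) :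
    a ∈ N ∧ b ∈ N := by
  have ha : a = (2 : K)⁻¹ • ((a + c • b) + (a - c • b)) := by
    rw [add_add_sub_cancel, ← two_smul K a, smul_smul, inv_mul_cancel₀ h2, one_smul]
  have hb : b = (2 * c)⁻¹ • ((a + c • b) - (a - c • b)) := by
    rw [add_sub_sub_cancel, ← two_smul K (c • b), smul_smul, smul_smul, mul_assoc,
      inv_mul_cancel₀ (mul_ne_zero h2 hc), one_smul]
  exact ⟨ha ▸ N.smul_mem _ (N.add_mem hadd hsub), hb ▸ N.smul_mem _ (N.sub_mem hadd hsub)⟩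

theorem span_setOf_mem_span_pair_and_eq {P : V → Prop} {a b : V} {c : K}
    (h2 : (2 : K) ≠ 0) (hc : c ≠ 0) (hadd : P (a + c • b)) (hsub : P (a - c • b)) :
    Submodule.span K {x | x ∈ Submodule.span K {a, b} ∧ P x} = Submodule.span K {a, b} := by
  set N := Submodule.span K {x | x ∈ Submodule.span K {a, b} ∧ P x}
  have ha : a ∈ Submodule.span K {a, b} := Submodule.subset_span (Set.mem_insert _ _)
  have hb : b ∈ Submodule.span K {a, b} := Submodule.subset_span (Set.mem_insert_of_mem _ rfl)
  have hN : a ∈ N ∧ b ∈ N := mem_and_mem_of_add_smul_mem_of_sub_smul_mem h2 hc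
    (Submodule.subset_span ⟨Submodule.add_mem _ ha (Submodule.smul_mem _ c hb), hadd⟩)
    (Submodule.subset_span ⟨Submodule.sub_mem _ ha (Submodule.smul_mem _ c hb), hsub⟩)
  refine le_antisymm (Submodule.span_le.mpr fun x hx => hx.1) ?_
  exact Submodule.span_le.mpr (by rintro x (rfl | rfl); exacts [hN.1, hN.2])

end SpanPair

section Factorization

variable {R A : Type*} [CommRing R] [Ring A] [Algebra R A]

-- The trivectors `w₁`, `w₂`, with `e i` in the role of `u_{i+1}`.
def formW₁ (t : R) (e : Fin 6 → A) : A :=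
  e 0 * e 1 * e 2 + e 0 * e 4 * e 5 - t • (e 1 * e 3 * e 5) + e 2 * e 3 * e 4

def formW₂ (t : R) (e : Fin 6 → A) : A :=
  t • (e 0 * e 1 * e 5) + t • (e 1 * e 2 * e 3) + t • (e 3 * e 4 * e 5) - e 0 * e 2 * e 4

variable {U : Type*} [AddCommGroup U] [Module R U]

theorem ι_mul_ι_mem_exteriorPower_two (x y : U) : ι R x * ι R y ∈ ⋀[R]^2 U := by
  rw [exteriorPower, pow_two]
  exact Submodule.mul_mem_mul (LinearMap.mem_range_self _ _) (LinearMap.mem_range_self _ _)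

theorem ι_mul_ι_swap (x y : U) : ι R x * ι R y = -(ι R y * ι R x) :=
  eq_neg_of_add_eq_zero_left (ι_add_mul_swap x y)

theorem mul_ι_mul_ι_swap (a : ExteriorAlgebra R U) (x y : U) :
    a * ι R x * ι R y = -(a * ι R y * ι R x) := by
  rw [mul_assoc, ι_mul_ι_swap, mul_neg, ← mul_assoc]

theorem formW₁_add_smul_formW₂_eq (u : Fin 6 → U) {s t : R} (hst : s ^ 2 * t = 1) :
    formW₁ t (fun i => ι R (u i)) + s • formW₂ t (fun i => ι R (u i)) =
      ((s * t) • (ι R (u 0) * ι R (u 1)) + ι R (u 0) * ι R (u 4)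
        - t • (ι R (u 1) * ι R (u 3)) + (s * t) • (ι R (u 3) * ι R (u 4)))
        * ι R (s • u 2 + u 5) := by
  have h042 := mul_ι_mul_ι_swap (ι R (u 0)) (u 4) (u 2)
  have h132 := mul_ι_mul_ι_swap (ι R (u 1)) (u 3) (u 2)
  have h342 : ι R (u 3) * ι R (u 4) * ι R (u 2) = ι R (u 2) * ι R (u 3) * ι R (u 4) := by
    rw [mul_ι_mul_ι_swap, ι_mul_ι_swap (u 3), neg_mul, neg_neg]
  simp only [formW₁, formW₂, map_add, map_smul, mul_add, add_mul, sub_mul, smul_mul_assoc,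
    mul_smul_comm, h042, h132, h342]
  match_scalars <;> first | ring1 | linear_combination hst | linear_combination -hst

theorem exists_formW₁_add_smul_formW₂_eq_mul_ι (u : Fin 6 → U) {s t : R}
    (hst : s ^ 2 * t = 1) :
    ∃ u' ∈ ⋀[R]^2 U, ∃ v : U,
      formW₁ t (fun i => ι R (u i)) + s • formW₂ t (fun i => ι R (u i)) = u' * ι R v := by
  have hmem := ι_mul_ι_mem_exteriorPower_two (R := R) (U := U)
  refine ⟨_, ?_, _, formW₁_add_smul_formW₂_eq u hst⟩
  refine add_mem (sub_mem (add_mem ?_ (hmem _ _)) ?_) ?_ <;>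
    exact Submodule.smul_mem _ _ (hmem _ _)

end Factorization

/-- Let `p` be odd, `c ∈ F_p` nonzero, `t = 1/c²`, `U` a 6-dimensional `F_p`-vector space,
`w₁ = u₁∧u₂∧u₃ + u₁∧u₅∧u₆ − t u₂∧u₄∧u₆ + u₃∧u₄∧u₅`,
`w₂ = t u₁∧u₂∧u₆ + t u₂∧u₃∧u₄ + t u₄∧u₅∧u₆ − u₁∧u₃∧u₅`.  Then the span of the elements
of `span{w₁, w₂}` of the form `u' ∧ u` equals `span{w₁, w₂}`; explicitly `w₁ + c·w₂` and
`w₁ − c·w₂` are each of the form `u' ∧ u`. -/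
theorem stmt_8 (p : ℕ) [Fact p.Prime] (hp2 : p ≠ 2) (c t : ZMod p) (hc : c ≠ 0)
    (htc : t = 1 / c ^ 2) (U : Type*) [AddCommGroup U]
    [Module (ZMod p) U] (u : Module.Basis (Fin 6) (ZMod p) U) :
    let e : Fin 6 → ExteriorAlgebra (ZMod p) U := fun i => ι (ZMod p) (u i)
    let w₁ := e 0 * e 1 * e 2 + e 0 * e 4 * e 5 - t • (e 1 * e 3 * e 5) + e 2 * e 3 * e 4
    let w₂ := t • (e 0 * e 1 * e 5) + t • (e 1 * e 2 * e 3) + t • (e 3 * e 4 * e 5)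
      - e 0 * e 2 * e 4
    let S₃ : Submodule (ZMod p) (ExteriorAlgebra (ZMod p) U) :=
      Submodule.span (ZMod p) {w₁, w₂}
    Submodule.span (ZMod p)
        {x | x ∈ S₃ ∧ ∃ u' ∈ ⋀[ZMod p]^2 U, ∃ v : U, x = u' * ι (ZMod p) v} = S₃ ∧
      (∃ u' ∈ ⋀[ZMod p]^2 U, ∃ v : U, w₁ + c • w₂ = u' * ι (ZMod p) v) ∧
      (∃ u' ∈ ⋀[ZMod p]^2 U, ∃ v : U, w₁ - c • w₂ = u' * ι (ZMod p) v) := by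
  intro e w₁ w₂ S₃
  have hct : c ^ 2 * t = 1 := by
    rw [htc]
    field_simp
  have hadd : ∃ u' ∈ ⋀[ZMod p]^2 U, ∃ v : U, w₁ + c • w₂ = u' * ι (ZMod p) v :=
    exists_formW₁_add_smul_formW₂_eq_mul_ι (fun i => u i) hct
  have hsub : ∃ u' ∈ ⋀[ZMod p]^2 U, ∃ v : U, w₁ - c • w₂ = u' * ι (ZMod p) v := by
    rw [sub_eq_add_neg, ← neg_smul]
    exact exists_formW₁_add_smul_formW₂_eq_mul_ι (fun i => u i) (by rwa [neg_sq])
  have h2 : (2 : ZMod p) ≠ 0 := Ring.two_ne_zero (by rwa [ZMod.ringChar_zmod_n])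
  exact ⟨span_setOf_mem_span_pair_and_eq h2 hc hadd hsub, hadd, hsub⟩
end
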